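/- arXiv:math-ph/0307046 — 3 statements merged into one kernel-verified Lean document; each statement's English description precedes it below -/
import Mathlib

section
/- For any n×n Hermitian positive semidefinite matrix M, the permanent of M is at least the product of the permanent of any principal (n−m)×(n−m) submatrix and the permanent of its complementary principal m×m submatrix. In particular, perm(M) ≥ ∏_{i=1}^n M_{ii}. -/
open scoped BigOperators ComplexOrder

noncomputable def permanent {m : Type*} [Fintype m] [DecidableEq m]
    (M : Matrix m m ℂ) : ℂ :=
  ∑ σ : Equiv.Perm m, ∏ i, M (σ i) i

/-!
Lieb's argument. Write `M = Cᴴ * C` with index set `α ⊕ β` and put `u r = ∏ i, C (r i) i` for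
`r : α ⊕ β → κ`. Each term `∏ i, M (σ i) i` of the permanent is the autocorrelation
`∑ r, conj (u r) * u (r ∘ σ)`, and the product of the permanents of the two diagonal blocks
collects exactly the terms with `σ` in the block subgroup `H = Perm α × Perm β`. Averaging `u`
over `H` gives `w r = perm C[r ∘ inl, inl] * perm C[r ∘ inr, inr]`, a product of two symmetric
functions, and the autocorrelations of `w` at the `ρ ∉ H` add up to `|H|²` times the remaining
terms of `perm M`. Each of them is nonnegative: by symmetry `ρ` may be replaced by an involution
exchanging a block `F ⊆ α` with a block of `β`, and then the sum is a sum of `|z|²`.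
Splitting off one index at a time gives the bound by the diagonal.
-/

section

open Finset Equiv Matrix Function

namespace Matrix

variable {m n R : Type*} [Fintype m] [DecidableEq m] [Fintype n] [DecidableEq n] [CommSemiring R]

theorem permanent_submatrix_equiv_self (e : m ≃ n) (M : Matrix n n R) :
    (M.submatrix e e).permanent = M.permanent := by
  refine Fintype.sum_equiv (permCongr e) _ _ fun σ => ?_
  rw [← e.prod_comp]
  simp [permCongr_apply]

theorem permanent_toBlocks₁₁_mul_permanent_toBlocks₂₂ {α β : Type*} [Fintype α] [DecidableEq α]
    [Fintype β] [DecidableEq β] (M : Matrix (α ⊕ β) (α ⊕ β) R) :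
    M.toBlocks₁₁.permanent * M.toBlocks₂₂.permanent =
      ∑ p : Perm α × Perm β, ∏ i, M (Perm.sumCongr p.1 p.2 i) i := by
  simp only [permanent, sum_mul_sum, Fintype.sum_prod_type, Fintype.prod_sum_type, toBlocks₁₁,
    toBlocks₂₂, Perm.sumCongr_apply, Sum.map_inl, Sum.map_inr, of_apply]

end Matrix

def autocorrelation {ι κ R : Type*} [Fintype ι] [DecidableEq ι] [Fintype κ]
    [NonUnitalNonAssocSemiring R] [Star R] (w : (ι → κ) → R) (σ : Perm ι) : R :=
  ∑ r, star (w r) * w (r ∘ σ)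

theorem prod_conjTranspose_mul_self_eq_autocorrelation {n κ R : Type*} [Fintype n]
    [DecidableEq n] [Fintype κ] [CommSemiring R] [StarRing R] (C : Matrix κ n R) (σ : Perm n) :
    ∏ i, (Cᴴ * C) (σ i) i = autocorrelation (fun r => ∏ i, C (r i) i) σ := by
  simp only [mul_apply, conjTranspose_apply, Fintype.prod_sum, autocorrelation]
  refine Fintype.sum_equiv (arrowCongr σ (Equiv.refl κ)) _ _ fun r => ?_
  simp only [arrowCongr_apply, coe_refl, Function.comp_apply, id, symm_apply_apply, star_prod,
    prod_mul_distrib]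
  rw [← Equiv.prod_comp σ fun i => star (C (r (σ.symm i)) i)]
  simp

theorem autocorrelation_sum_comp {ι κ P R : Type*} [Fintype ι] [DecidableEq ι] [Fintype κ]
    [Fintype P] [NonUnitalNonAssocSemiring R] [StarAddMonoid R] (u : (ι → κ) → R)
    (h : P → Perm ι) (ρ : Perm ι) :
    autocorrelation (fun r => ∑ p, u (r ∘ h p)) ρ =
      ∑ p, ∑ q, autocorrelation u ((h p)⁻¹ * ρ * h q) := by
  simp only [autocorrelation, star_sum, sum_mul_sum]
  rw [sum_comm]
  refine sum_congr rfl fun p _ => ?_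
  rw [sum_comm]
  refine sum_congr rfl fun q _ => ?_
  refine Fintype.sum_equiv (arrowCongr (h p).symm (Equiv.refl κ)) _ _ fun r => ?_
  congr 2
  ext i
  simp [arrowCongr_apply]

theorem Subgroup.sum_filter_notMem_mul_mul {G M : Type*} [Group G] [Fintype G]
    [AddCommMonoid M] (K : Subgroup G) [DecidablePred (· ∈ K)] {a b : G} (ha : a ∈ K)
    (hb : b ∈ K) (f : G → M) :
    ∑ g ∈ univ.filter (· ∉ K), f (a * g * b) = ∑ g ∈ univ.filter (· ∉ K), f g :=
  Finset.sum_equiv ((Equiv.mulRight b).trans (Equiv.mulLeft a))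
    (by simp [K.mul_mem_cancel_left ha, K.mul_mem_cancel_right hb]) (by simp [mul_assoc])

theorem apply_comp_eq_of_forall_mem_range {α X κ R : Type*} [Finite α] {a : (α → κ) → R}
    (ha : ∀ p (π : Perm α), a (p ∘ π) = a p) {f g : α → X} (hf : Injective f)
    (hfg : ∀ x, f x ∈ Set.range g) (r : X → κ) : a (r ∘ f) = a (r ∘ g) := by
  choose π hπ using hfg
  have hπ_inj : Injective π := fun x y hxy => hf (by rw [← hπ x, ← hπ y, hxy])
  rw [← ha (r ∘ g) (Equiv.ofBijective π (Finite.injective_iff_bijective.mp hπ_inj))]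
  congr 1
  ext x
  simp [hπ]

theorem sum_star_mul_swap_nonneg {Y R : Type*} [Fintype Y] [CommSemiring R] [PartialOrder R]
    [StarRing R] [StarOrderedRing R] (A B : Y → R) :
    0 ≤ ∑ x, ∑ y, star (A x * B y) * (A y * B x) := by
  have : ∑ x, ∑ y, star (A x * B y) * (A y * B x) =
      (∑ x, star (A x) * B x) * star (∑ x, star (A x) * B x) := by
    simp only [star_sum, star_mul', star_star, sum_mul_sum]
    exact sum_congr rfl fun x _ => sum_congr rfl fun y _ => by ring
  rw [this]
  exact mul_star_self_nonneg _

theorem sum_star_mul_sumElim_swap_nonneg {E F I κ R : Type*} [Fintype E] [DecidableEq E]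
    [Fintype F] [DecidableEq F] [Fintype I] [DecidableEq I] [Fintype κ] [CommSemiring R]
    [PartialOrder R] [StarRing R] [StarOrderedRing R] (a : (E ⊕ F → κ) → R)
    (b : (F ⊕ I → κ) → R) :
    0 ≤ ∑ e, ∑ f, ∑ g, ∑ i,
      star (a (Sum.elim e f) * b (Sum.elim g i)) * (a (Sum.elim e g) * b (Sum.elim f i)) := by
  refine sum_nonneg fun e _ => ?_
  rw [sum_congr rfl fun f _ => sum_comm, sum_comm]
  exact sum_nonneg fun i _ =>
    sum_star_mul_swap_nonneg (fun f => a (Sum.elim e f)) (fun g => b (Sum.elim g i))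

/-- In the second factor, `a` and `b` are evaluated at `r ∘ σ ∘ inl` and `r ∘ σ ∘ inr`, where `σ`
is the involution of `α ⊕ β` exchanging `inl ∘ eα ∘ inr` with `inr ∘ eβ ∘ inl`. -/
theorem sum_star_mul_blockSwap_nonneg {α β E F I κ R : Type*} [Fintype α] [DecidableEq α]
    [Fintype β] [DecidableEq β] [Fintype E] [DecidableEq E] [Fintype F] [DecidableEq F]
    [Fintype I] [DecidableEq I] [Fintype κ] [CommSemiring R] [PartialOrder R] [StarRing R]
    [StarOrderedRing R] (a : (α → κ) → R) (b : (β → κ) → R) (eα : E ⊕ F ≃ α) (eβ : F ⊕ I ≃ β) :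
    0 ≤ ∑ r : α ⊕ β → κ, star (a (r ∘ Sum.inl) * b (r ∘ Sum.inr)) *
      (a (r ∘ Sum.elim (Sum.inl ∘ eα ∘ Sum.inl) (Sum.inr ∘ eβ ∘ Sum.inl) ∘ eα.symm) *
        b (r ∘ Sum.elim (Sum.inl ∘ eα ∘ Sum.inr) (Sum.inr ∘ eβ ∘ Sum.inr) ∘ eβ.symm)) := by
  let split : (α ⊕ β → κ) ≃ (E → κ) × (F → κ) × (F → κ) × (I → κ) :=
    ((sumArrowEquivProdArrow α β κ).trans <| prodCongr
      ((arrowCongr eα.symm (Equiv.refl κ)).trans (sumArrowEquivProdArrow E F κ))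
      ((arrowCongr eβ.symm (Equiv.refl κ)).trans (sumArrowEquivProdArrow F I κ))).trans
      (prodAssoc _ _ _)
  have h := sum_star_mul_sumElim_swap_nonneg (fun q => a (q ∘ eα.symm)) (fun q => b (q ∘ eβ.symm))
  simp only [← Fintype.sum_prod_type'] at h
  refine h.trans_eq (Fintype.sum_equiv split _ _ fun r => ?_).symm
  congr 4 <;> ext x
  · obtain ⟨z | z, rfl⟩ := eα.surjective x <;> simp [split]
  · obtain ⟨z | z, rfl⟩ := eβ.surjective x <;> simp [split]
  · obtain ⟨z | z, rfl⟩ := eα.surjective x <;> simp [split]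
  · obtain ⟨z | z, rfl⟩ := eβ.surjective x <;> simp [split]

theorem Nat.card_inl_notMem_eq_card_inr_mem {α β : Type*} [Finite α] [Finite β]
    {T : Set (α ⊕ β)} (hT : Nat.card T = Nat.card α) :
    Nat.card {x // Sum.inl x ∉ T} = Nat.card {y // Sum.inr y ∈ T} := by
  classical
  have hα : Nat.card {x // Sum.inl x ∈ T} + Nat.card {x // Sum.inl x ∉ T} = Nat.card α := by
    rw [← Nat.card_sum, Nat.card_congr (Equiv.sumCompl _)]
  have hT' : Nat.card {x // Sum.inl x ∈ T} + Nat.card {y // Sum.inr y ∈ T} = Nat.card α := by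
    rw [← Nat.card_sum, ← Nat.card_congr Equiv.subtypeSum, ← hT]
  omega

theorem autocorrelation_mul_nonneg {α β κ R : Type*} [Fintype α] [DecidableEq α] [Fintype β]
    [DecidableEq β] [Fintype κ] [CommSemiring R] [PartialOrder R] [StarRing R]
    [StarOrderedRing R] {a : (α → κ) → R} {b : (β → κ) → R}
    (ha : ∀ p (π : Perm α), a (p ∘ π) = a p) (hb : ∀ q (π : Perm β), b (q ∘ π) = b q)
    (ρ : Perm (α ⊕ β)) :
    0 ≤ autocorrelation (fun r => a (r ∘ Sum.inl) * b (r ∘ Sum.inr)) ρ := by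
  classical
  -- `w (r ∘ ρ)` reads `r` on `T` through `a` and on `Tᶜ` through `b`; by symmetry only `T`
  -- matters, so `ρ` can be traded for the involution exchanging `α \ T` with `β ∩ T`.
  set T := Set.range (ρ ∘ Sum.inl)
  have hTc : ∀ z, z ∉ T → z ∈ Set.range (ρ ∘ Sum.inr) := by
    intro z hz
    rcases h : ρ.symm z with x | y
    · exact absurd ⟨x, by simp [← h]⟩ hz
    · exact ⟨y, by simp [← h]⟩
  obtain ⟨φ⟩ : Nonempty ({x // Sum.inl x ∉ T} ≃ {y // Sum.inr y ∈ T}) :=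
    Finite.card_eq.mp <| Nat.card_inl_notMem_eq_card_inr_mem <|
      Nat.card_range_of_injective (ρ.injective.comp Sum.inl_injective)
  let eα : {x // Sum.inl x ∈ T} ⊕ {x // Sum.inl x ∉ T} ≃ α := Equiv.sumCompl _
  let eβ : {x // Sum.inl x ∉ T} ⊕ {y // Sum.inr y ∉ T} ≃ β :=
    (Equiv.sumCongr φ (Equiv.refl _)).trans (Equiv.sumCompl _)
  refine (sum_star_mul_blockSwap_nonneg a b eα eβ).trans_eq (sum_congr rfl fun r _ => ?_)
  congr 2
  · refine apply_comp_eq_of_forall_mem_range ha ?_ (fun x => ?_) r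
    · exact ((Sum.inl_injective.comp (eα.injective.comp Sum.inl_injective)).sumElim
        (Sum.inr_injective.comp (eβ.injective.comp Sum.inl_injective))
        fun _ _ => Sum.inl_ne_inr).comp eα.symm.injective
    · obtain ⟨z | z, rfl⟩ := eα.surjective x
      · simpa [eα, T] using z.2
      · simpa [eα, eβ, T] using (φ z).2
  · refine apply_comp_eq_of_forall_mem_range hb ?_ (fun y => hTc _ ?_) r
    · exact ((Sum.inl_injective.comp (eα.injective.comp Sum.inr_injective)).sumElim
        (Sum.inr_injective.comp (eβ.injective.comp Sum.inr_injective))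
        fun _ _ => Sum.inl_ne_inr).comp eβ.symm.injective
    · obtain ⟨z | z, rfl⟩ := eβ.surjective y
      · simpa [eα, eβ] using z.2
      · simpa [eβ] using z.2

theorem sum_autocorrelation_notMem_range_sumCongrHom_nonneg {α β κ : Type*} [Fintype α]
    [DecidableEq α] [Fintype β] [DecidableEq β] [Fintype κ] (C : Matrix κ (α ⊕ β) ℂ) :
    0 ≤ ∑ σ ∈ univ.filter (· ∉ (Perm.sumCongrHom α β).range),
      autocorrelation (fun r => ∏ i, C (r i) i) σ := by
  set K := (Perm.sumCongrHom α β).range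
  set u : (α ⊕ β → κ) → ℂ := fun r => ∏ i, C (r i) i
  let a : (α → κ) → ℂ := fun p => (C.submatrix p Sum.inl).permanent
  let b : (β → κ) → ℂ := fun q => (C.submatrix q Sum.inr).permanent
  have hblocks : (fun r => a (r ∘ Sum.inl) * b (r ∘ Sum.inr)) =
      fun r => ∑ p, u (r ∘ Perm.sumCongrHom α β p) :=
    funext fun r => permanent_toBlocks₁₁_mul_permanent_toBlocks₂₂ (C.submatrix r id)
  have hK : ∀ p, Perm.sumCongrHom α β p ∈ K := fun p => ⟨p, rfl⟩
  have hscale : (Fintype.card (Perm α × Perm β) : ℂ) ^ 2 * ∑ σ ∈ univ.filter (· ∉ K),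
      autocorrelation u σ = ∑ σ ∈ univ.filter (· ∉ K),
        autocorrelation (fun r => a (r ∘ Sum.inl) * b (r ∘ Sum.inr)) σ := by
    simp_rw [hblocks, autocorrelation_sum_comp]
    rw [sum_comm]
    simp_rw [sum_comm (s := univ.filter (· ∉ K)) (t := univ)]
    simp_rw [K.sum_filter_notMem_mul_mul (inv_mem (hK _)) (hK _)]
    simp [sq, mul_assoc]
  have hnonneg : 0 ≤ ∑ σ ∈ univ.filter (· ∉ K),
      autocorrelation (fun r => a (r ∘ Sum.inl) * b (r ∘ Sum.inr)) σ :=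
    sum_nonneg fun σ _ => autocorrelation_mul_nonneg
      (fun p π => permanent_permute_cols π (C.submatrix p Sum.inl))
      (fun q π => permanent_permute_cols π (C.submatrix q Sum.inr)) σ
  rw [← hscale, ← mul_zero ((Fintype.card (Perm α × Perm β) : ℂ) ^ 2)] at hnonneg
  exact le_of_mul_le_mul_left hnonneg (by positivity)

namespace Matrix.PosSemidef

variable {α β ι : Type*} [Fintype α] [DecidableEq α] [Fintype β] [DecidableEq β] [Fintype ι]
  [DecidableEq ι]

theorem permanent_toBlocks₁₁_mul_permanent_toBlocks₂₂_le {M : Matrix (α ⊕ β) (α ⊕ β) ℂ}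
    (hM : M.PosSemidef) : M.toBlocks₁₁.permanent * M.toBlocks₂₂.permanent ≤ M.permanent := by
  obtain ⟨C, rfl⟩ : ∃ C : Matrix (α ⊕ β) (α ⊕ β) ℂ, M = Cᴴ * C := by
    open scoped MatrixOrder in exact CStarAlgebra.nonneg_iff_eq_star_mul_self.mp hM.nonneg
  set K := (Perm.sumCongrHom α β).range
  have hK : univ.filter (· ∈ K) = univ.image (Perm.sumCongrHom α β) := by ext; simp [K]
  rw [permanent_toBlocks₁₁_mul_permanent_toBlocks₂₂, Matrix.permanent,
    ← sum_filter_add_sum_filter_not univ (· ∈ K), hK,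
    sum_image fun p _ q _ h => Perm.sumCongrHom_injective h]
  simp_rw [prod_conjTranspose_mul_self_eq_autocorrelation]
  exact le_add_of_nonneg_right (sum_autocorrelation_notMem_range_sumCongrHom_nonneg C)

theorem permanent_submatrix_some_mul_le {M : Matrix (Option α) (Option α) ℂ}
    (hM : M.PosSemidef) : (M.submatrix some some).permanent * M none none ≤ M.permanent := by
  have h := (hM.submatrix (Equiv.optionEquivSumPUnit.{0} α).symm)
    |>.permanent_toBlocks₁₁_mul_permanent_toBlocks₂₂_le
  rwa [permanent_submatrix_equiv_self, permanent_unique (toBlocks₂₂ _)] at h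

theorem prod_diag_le_permanent {M : Matrix ι ι ℂ} (hM : M.PosSemidef) :
    ∏ i, M i i ≤ M.permanent := by
  refine Fintype.induction_empty_option (P := fun ι _ => ∀ [DecidableEq ι] (M : Matrix ι ι ℂ),
    M.PosSemidef → ∏ i, M i i ≤ M.permanent) ?_ ?_ ?_ ι M hM
  · intro α β _ e h _ M hM
    classical
    let _ : Fintype α := Fintype.ofEquiv β e.symm
    convert h (M.submatrix e e) (hM.submatrix e) using 1
    · exact (Fintype.prod_equiv e _ _ fun _ => rfl).symm
    · exact (permanent_submatrix_equiv_self e M).symm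
  · intro _ M _
    simp [permanent_isEmpty]
  · intro α _ ih _ M hM
    classical
    rw [Fintype.prod_option, mul_comm]
    calc (∏ i, M (some i) (some i)) * M none none
        ≤ (M.submatrix some some).permanent * M none none :=
          mul_le_mul_of_nonneg_right (ih _ (hM.submatrix some)) hM.diag_nonneg
      _ ≤ M.permanent := by convert hM.permanent_submatrix_some_mul_le

theorem permanent_nonneg {M : Matrix ι ι ℂ} (hM : M.PosSemidef) : 0 ≤ M.permanent :=
  (prod_nonneg fun _ _ => hM.diag_nonneg).trans hM.prod_diag_le_permanent

theorem permanent_submatrix_mul_permanent_submatrix_compl_le {M : Matrix ι ι ℂ}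
    (hM : M.PosSemidef) (S : Finset ι) :
    (M.submatrix ((↑) : S → ι) (↑)).permanent * (M.submatrix ((↑) : ↥Sᶜ → ι) (↑)).permanent ≤
      M.permanent := by
  let e : S ⊕ ↥Sᶜ ≃ ι := (Equiv.sumCongr (Equiv.refl _)
    (Equiv.subtypeEquivRight fun _ => Finset.mem_compl)).trans (Equiv.sumCompl (· ∈ S))
  have h := (hM.submatrix e).permanent_toBlocks₁₁_mul_permanent_toBlocks₂₂_le
  rwa [permanent_submatrix_equiv_self] at h

end Matrix.PosSemidef

end

theorem permanent_eq_matrix_permanent {m : Type*} [Fintype m] [DecidableEq m]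
    (M : Matrix m m ℂ) : permanent M = M.permanent :=
  rfl

theorem stmt0 (n : ℕ) (M : Matrix (Fin n) (Fin n) ℂ) (hM : M.PosSemidef)
    (S : Finset (Fin n)) :
    (permanent (M.submatrix (fun i : {x // x ∈ S} => (i : Fin n))
        (fun i : {x // x ∈ S} => (i : Fin n)))).re *
      (permanent (M.submatrix (fun i : {x // x ∈ Sᶜ} => (i : Fin n))
        (fun i : {x // x ∈ Sᶜ} => (i : Fin n)))).re ≤ (permanent M).re
    ∧ (∏ i, (M i i).re) ≤ (permanent M).re := by
  simp only [permanent_eq_matrix_permanent]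
  have hS := (hM.submatrix ((↑) : S → Fin n)).permanent_nonneg
  have hdiag : ∀ i, ((M i i).re : ℂ) = M i i := fun i => hM.1.coe_re_apply_self i
  constructor
  · calc _ = (_ * _ : ℂ).re := by simp [Complex.mul_re, ← (Complex.nonneg_iff.mp hS).2]
      _ ≤ M.permanent.re :=
        (Complex.le_def.mp (hM.permanent_submatrix_mul_permanent_submatrix_compl_le S)).1
  · calc ∏ i, (M i i).re = (∏ i, M i i).re := by
          rw [← Complex.ofReal_re (∏ i, (M i i).re), Complex.ofReal_prod]
          simp_rw [hdiag]
      _ ≤ M.permanent.re := (Complex.le_def.mp hM.prod_diag_le_permanent).1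
end

section
/- Let χ : ℝ^3 → ℝ be smooth with compact support in the unit ball and ∫ χ^2 = 1, and define the matrix M_{ij}(X) = ∫_{ℝ^3} χ(x_i − y) χ(x_j − y) dy for X = (x_1,...,x_n) ∈ (ℝ^3)^n. Set G(X,Y) = ∑_{π ∈ S_n} ∏_{i=1}^n χ(x_i − y_{π(i)}), and P(X) = ∫_{(ℝ^3)^{n}} G(X,Y)^2 dY. Then P(X) = n! · perm(M(X)), and in particular P(X) ≥ n!. -/
open MeasureTheory
open scoped BigOperators

noncomputable section

abbrev E3 : Type := EuclideanSpace ℝ (Fin 3)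

/-- `G(X,Y) = ∑_{π ∈ S_n} ∏_i χ(x_i − y_{π(i)})`. -/
def Gfun (n : ℕ) (χ : E3 → ℝ) (X Y : Fin n → E3) : ℝ :=
  ∑ σ : Equiv.Perm (Fin n), ∏ i, χ (X i - Y (σ i))

/-- `P(X) = ∫ G(X,Y)² dY`. -/
def Pfun (n : ℕ) (χ : E3 → ℝ) (X : Fin n → E3) : ℝ :=
  ∫ Y : Fin n → E3, (Gfun n χ X Y) ^ 2

/-- `M_{ij}(X) = ∫ χ(x_i − y) χ(x_j − y) dy`. -/
def Mmat (n : ℕ) (χ : E3 → ℝ) (X : Fin n → E3) : Matrix (Fin n) (Fin n) ℝ :=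
  fun i j => ∫ y : E3, χ (X i - y) * χ (X j - y)

/-- permanent of a real `n × n` matrix. -/
def permanentR (n : ℕ) (M : Matrix (Fin n) (Fin n) ℝ) : ℝ :=
  ∑ σ : Equiv.Perm (Fin n), ∏ i, M (σ i) i

namespace StmtAux

variable {ι : Type} [Fintype ι]

/-- real dot product of finitely supported tuples -/
def dot (u w : ι → ℝ) : ℝ := ∑ t, u t * w t

lemma dot_comm (u w : ι → ℝ) : dot u w = dot w u := by
  unfold dot; exact Finset.sum_congr rfl fun t _ => mul_comm _ _

lemma dot_self_nonneg (u : ι → ℝ) : 0 ≤ dot u u :=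
  Finset.sum_nonneg fun t _ => mul_self_nonneg _

/-- permanent of the Gram matrix of a tuple of vectors -/
def perV (n : ℕ) (v : Fin n → ι → ℝ) : ℝ :=
  ∑ σ : Equiv.Perm (Fin n), ∏ i, dot (v (σ i)) (v i)

lemma prod_dot {k : ℕ} (A B : Fin k → ι → ℝ) :
    ∏ t, dot (A t) (B t) = ∑ f : Fin k → ι, ∏ t, A t (f t) * B t (f t) := by
  classical
  unfold dot
  rw [Fintype.prod_sum]

/-- the permutation sending `b ↦ q` and `b.succAbove s ↦ q.succAbove (η s)`. -/
def psi {m : ℕ} (q b : Fin (m+1)) (η : Equiv.Perm (Fin m)) : Equiv.Perm (Fin (m+1)) :=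
  ((finSuccEquiv' b).trans η.optionCongr).trans (finSuccEquiv' q).symm

@[simp] lemma psi_apply_base {m : ℕ} (q b : Fin (m+1)) (η : Equiv.Perm (Fin m)) :
    psi q b η b = q := by
  simp [psi, finSuccEquiv'_at, finSuccEquiv'_symm_none]

@[simp] lemma psi_apply_succAbove {m : ℕ} (q b : Fin (m+1)) (η : Equiv.Perm (Fin m))
    (s : Fin m) : psi q b η (b.succAbove s) = q.succAbove (η s) := by
  simp [psi, finSuccEquiv'_succAbove, finSuccEquiv'_symm_some]

lemma psi_inj_aux {m : ℕ} {q b b' : Fin (m+1)} {η η' : Equiv.Perm (Fin m)}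
    (h : psi q b η = psi q b' η') : b = b' ∧ η = η' := by
  have hb : b = b' := by
    have h1 : psi q b' η' b = q := by rw [← h]; simp
    have h2 : psi q b' η' b = psi q b' η' b' := by rw [h1, psi_apply_base]
    exact (psi q b' η').injective h2
  subst hb
  refine ⟨rfl, ?_⟩
  ext s
  have h1 : psi q b η (b.succAbove s) = psi q b η' (b.succAbove s) := by rw [h]
  rw [psi_apply_succAbove, psi_apply_succAbove] at h1
  exact congrArg Fin.val (Fin.succAbove_right_injective h1)

lemma psi_inj_aux' {m : ℕ} {q q' b : Fin (m+1)} {η η' : Equiv.Perm (Fin m)}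
    (h : psi q b η = psi q' b η') : q = q' ∧ η = η' := by
  have hq : q = q' := by
    have h1 : psi q b η b = q := psi_apply_base _ _ _
    rw [h, psi_apply_base] at h1; exact h1.symm
  subst hq
  refine ⟨rfl, ?_⟩
  ext s
  have h1 : psi q b η (b.succAbove s) = psi q b η' (b.succAbove s) := by rw [h]
  rw [psi_apply_succAbove, psi_apply_succAbove] at h1
  exact congrArg Fin.val (Fin.succAbove_right_injective h1)

lemma card_eq_psi (m : ℕ) :
    Fintype.card (Fin (m+1) × Equiv.Perm (Fin m)) = Fintype.card (Equiv.Perm (Fin (m+1))) := by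
  simp [Fintype.card_perm, Nat.factorial_succ]

/-- reindexing a sum over permutations, version summing over the preimage of `q`. -/
lemma sum_psi_fst {m : ℕ} (q : Fin (m+1)) (F : Equiv.Perm (Fin (m+1)) → ℝ) :
    ∑ e : Equiv.Perm (Fin (m+1)), F e
      = ∑ b : Fin (m+1), ∑ η : Equiv.Perm (Fin m), F (psi q b η) := by
  calc ∑ e : Equiv.Perm (Fin (m+1)), F e
      = ∑ p : Fin (m+1) × Equiv.Perm (Fin m), F (psi q p.1 p.2) := by
        refine (Fintype.sum_bijective (fun p : Fin (m+1) × Equiv.Perm (Fin m) => psi q p.1 p.2)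
          ?_ _ _ (fun p => rfl)).symm
        rw [Fintype.bijective_iff_injective_and_card]
        exact ⟨fun p p' h => by
          obtain ⟨h1, h2⟩ := psi_inj_aux h; exact Prod.ext h1 h2, card_eq_psi m⟩
    _ = ∑ b : Fin (m+1), ∑ η : Equiv.Perm (Fin m), F (psi q b η) := Fintype.sum_prod_type _

/-- reindexing a sum over permutations, version summing over the image of `b`. -/
lemma sum_psi_snd {m : ℕ} (b : Fin (m+1)) (F : Equiv.Perm (Fin (m+1)) → ℝ) :
    ∑ e : Equiv.Perm (Fin (m+1)), F e
      = ∑ q : Fin (m+1), ∑ η : Equiv.Perm (Fin m), F (psi q b η) := by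
  calc ∑ e : Equiv.Perm (Fin (m+1)), F e
      = ∑ p : Fin (m+1) × Equiv.Perm (Fin m), F (psi p.1 b p.2) := by
        refine (Fintype.sum_bijective (fun p : Fin (m+1) × Equiv.Perm (Fin m) => psi p.1 b p.2)
          ?_ _ _ (fun p => rfl)).symm
        rw [Fintype.bijective_iff_injective_and_card]
        exact ⟨fun p p' h => by
          obtain ⟨h1, h2⟩ := psi_inj_aux' h; exact Prod.ext h1 h2, card_eq_psi m⟩
    _ = ∑ q : Fin (m+1), ∑ η : Equiv.Perm (Fin m), F (psi q b η) := Fintype.sum_prod_type _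

end StmtAux

namespace StmtAux

lemma key_pos {ι : Type} [Fintype ι] {α : Type} [Fintype α] (k : ℕ) (c : α → ℝ)
    (A : α → Fin k → ι → ℝ) :
    0 ≤ ∑ a, ∑ b, c a * c b * (∑ ζ : Equiv.Perm (Fin k), ∏ t, dot (A a (ζ t)) (A b t)) := by
  classical
  set K : α → α → ℝ := fun a b => ∑ ζ : Equiv.Perm (Fin k), ∏ t, dot (A a (ζ t)) (A b t) with hK
  set T : α → (Fin k → ι) → ℝ :=
    fun a f => ∑ ζ : Equiv.Perm (Fin k), ∏ t, A a (ζ t) (f t) with hT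
  have hTT : ∀ a b, ∑ f : Fin k → ι, T a f * T b f = (k.factorial : ℝ) * K a b := by
    intro a b
    have step1 : ∀ f : Fin k → ι, T a f * T b f
        = ∑ ζ : Equiv.Perm (Fin k), ∑ ζ' : Equiv.Perm (Fin k),
            ∏ t, (A a (ζ t) (f t) * A b (ζ' t) (f t)) := by
      intro f
      rw [hT]
      rw [Fintype.sum_mul_sum]
      refine Finset.sum_congr rfl fun ζ _ => Finset.sum_congr rfl fun ζ' _ => ?_
      rw [Finset.prod_mul_distrib]
    calc ∑ f : Fin k → ι, T a f * T b f
        = ∑ f : Fin k → ι, ∑ ζ : Equiv.Perm (Fin k), ∑ ζ' : Equiv.Perm (Fin k),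
            ∏ t, (A a (ζ t) (f t) * A b (ζ' t) (f t)) := Finset.sum_congr rfl fun f _ => step1 f
      _ = ∑ ζ : Equiv.Perm (Fin k), ∑ ζ' : Equiv.Perm (Fin k), ∑ f : Fin k → ι,
            ∏ t, (A a (ζ t) (f t) * A b (ζ' t) (f t)) := by
          rw [Finset.sum_comm]
          exact Finset.sum_congr rfl fun ζ _ => Finset.sum_comm
      _ = ∑ ζ : Equiv.Perm (Fin k), ∑ ζ' : Equiv.Perm (Fin k),
            ∏ t, dot (A a (ζ t)) (A b (ζ' t)) := by
          refine Finset.sum_congr rfl fun ζ _ => Finset.sum_congr rfl fun ζ' _ => ?_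
          rw [prod_dot]
      _ = ∑ ζ' : Equiv.Perm (Fin k), ∑ ζ : Equiv.Perm (Fin k),
            ∏ t, dot (A a (ζ t)) (A b (ζ' t)) := Finset.sum_comm
      _ = ∑ _ζ' : Equiv.Perm (Fin k), K a b := by
          refine Finset.sum_congr rfl fun ζ' _ => ?_
          rw [hK]
          refine Fintype.sum_equiv (Equiv.mulRight ζ'⁻¹) _ _ fun ζ => ?_
          rw [Equiv.coe_mulRight]
          rw [← Equiv.prod_comp ζ' (fun u => dot (A a ((ζ * ζ'⁻¹) u)) (A b u))]
          refine Finset.prod_congr rfl fun t _ => ?_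
          simp [Equiv.Perm.mul_apply]
      _ = (k.factorial : ℝ) * K a b := by
          rw [Finset.sum_const, nsmul_eq_mul]
          congr 1
          simp [Fintype.card_perm]
  have hsq : (0:ℝ) ≤ ∑ f : Fin k → ι, (∑ a, c a * T a f)^2 :=
    Finset.sum_nonneg fun f _ => sq_nonneg _
  have hexp : ∑ f : Fin k → ι, (∑ a, c a * T a f)^2
      = (k.factorial : ℝ) * ∑ a, ∑ b, c a * c b * K a b := by
    calc ∑ f : Fin k → ι, (∑ a, c a * T a f)^2
        = ∑ f : Fin k → ι, ∑ a, ∑ b, (c a * c b) * (T a f * T b f) := by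
          refine Finset.sum_congr rfl fun f _ => ?_
          rw [sq, Fintype.sum_mul_sum]
          exact Finset.sum_congr rfl fun a _ => Finset.sum_congr rfl fun b _ => by ring
      _ = ∑ a, ∑ b, (c a * c b) * ∑ f : Fin k → ι, T a f * T b f := by
          rw [Finset.sum_comm]
          refine Finset.sum_congr rfl fun a _ => ?_
          rw [Finset.sum_comm]
          refine Finset.sum_congr rfl fun b _ => ?_
          rw [Finset.mul_sum]
      _ = ∑ a, ∑ b, (k.factorial : ℝ) * (c a * c b * K a b) := by
          refine Finset.sum_congr rfl fun a _ => Finset.sum_congr rfl fun b _ => ?_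
          rw [hTT a b]; ring
      _ = (k.factorial : ℝ) * ∑ a, ∑ b, c a * c b * K a b := by
          rw [Finset.mul_sum]
          exact Finset.sum_congr rfl fun a _ => (Finset.mul_sum _ _ _).symm
  have hkpos : (0:ℝ) < (k.factorial : ℝ) := by
    exact_mod_cast Nat.factorial_pos k
  nlinarith [hsq, hexp]

theorem marcus {ι : Type} [Fintype ι] :
    ∀ (n : ℕ) (v : Fin n → ι → ℝ), ∏ i, dot (v i) (v i) ≤ perV n v := by
  intro n
  induction n with
  | zero =>
    intro v
    simp [perV]
  | succ m ih =>
    intro v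
    have expand : perV (m+1) v
        = ∑ b : Fin (m+1), ∑ η : Equiv.Perm (Fin m),
            dot (v 0) (v b) * ∏ s, dot (v ((η s).succ)) (v (b.succAbove s)) := by
      rw [perV, sum_psi_fst (0 : Fin (m+1))]
      refine Finset.sum_congr rfl fun b _ => Finset.sum_congr rfl fun η _ => ?_
      rw [Fin.prod_univ_succAbove (fun i => dot (v (psi 0 b η i)) (v i)) b]
      rw [psi_apply_base]
      congr 1
      refine Finset.prod_congr rfl fun s _ => ?_
      rw [psi_apply_succAbove, Fin.zero_succAbove]
    rw [expand, Fin.sum_univ_succ]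
    have h0 : ∑ η : Equiv.Perm (Fin m),
        dot (v 0) (v 0) * ∏ s, dot (v ((η s).succ)) (v ((0:Fin (m+1)).succAbove s))
        = dot (v 0) (v 0) * perV m (fun s => v s.succ) := by
      rw [perV, Finset.mul_sum]
      rfl
    rw [h0]
    have hR : 0 ≤ ∑ b : Fin m, ∑ η : Equiv.Perm (Fin m),
        dot (v 0) (v b.succ) * ∏ s, dot (v ((η s).succ)) (v (b.succ.succAbove s)) := by
      match m with
      | 0 => simp
      | k+1 =>
        have inner : ∀ b : Fin (k+1),
            ∑ η : Equiv.Perm (Fin (k+1)), ∏ s, dot (v ((η s).succ)) (v (b.succ.succAbove s))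
            = ∑ a : Fin (k+1), dot (v a.succ) (v 0) *
                ∑ ζ : Equiv.Perm (Fin k),
                  ∏ t, dot (v ((a.succAbove (ζ t)).succ)) (v ((b.succAbove t).succ)) := by
          intro b
          rw [sum_psi_snd (0 : Fin (k+1))
            (fun η => ∏ s, dot (v ((η s).succ)) (v (b.succ.succAbove s)))]
          refine Finset.sum_congr rfl fun a _ => ?_
          rw [Finset.mul_sum]
          refine Finset.sum_congr rfl fun ζ _ => ?_
          rw [Fin.prod_univ_succ]
          congr 1
          · refine Finset.prod_congr rfl fun t _ => ?_
            have h1 : psi a 0 ζ t.succ = a.succAbove (ζ t) := by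
              have := psi_apply_succAbove a 0 ζ t
              rwa [Fin.zero_succAbove] at this
            rw [h1, Fin.succ_succAbove_succ]
        have : ∑ b : Fin (k+1), ∑ η : Equiv.Perm (Fin (k+1)),
            dot (v 0) (v b.succ) * ∏ s, dot (v ((η s).succ)) (v (b.succ.succAbove s))
            = ∑ b : Fin (k+1), ∑ a : Fin (k+1),
                (fun x : Fin (k+1) => dot (v x.succ) (v 0)) a *
                (fun x : Fin (k+1) => dot (v x.succ) (v 0)) b *
                ∑ ζ : Equiv.Perm (Fin k),
                  ∏ t, dot (v ((a.succAbove (ζ t)).succ)) (v ((b.succAbove t).succ)) := by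
          refine Finset.sum_congr rfl fun b _ => ?_
          rw [← Finset.mul_sum, inner b, Finset.mul_sum]
          refine Finset.sum_congr rfl fun a _ => ?_
          rw [dot_comm (v 0) (v b.succ)]
          ring
        rw [this, Finset.sum_comm]
        exact key_pos k (fun x : Fin (k+1) => dot (v x.succ) (v 0))
          (fun a t => v ((a.succAbove t).succ))
    calc ∏ i, dot (v i) (v i)
        = dot (v 0) (v 0) * ∏ s : Fin m, dot (v s.succ) (v s.succ) := Fin.prod_univ_succ _
      _ ≤ dot (v 0) (v 0) * perV m (fun s => v s.succ) := by
          refine mul_le_mul_of_nonneg_left ?_ (dot_self_nonneg _)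
          exact ih (fun s => v s.succ)
      _ ≤ dot (v 0) (v 0) * perV m (fun s => v s.succ) +
          ∑ b : Fin m, ∑ η : Equiv.Perm (Fin m),
            dot (v 0) (v b.succ) * ∏ s, dot (v ((η s).succ)) (v (b.succ.succAbove s)) :=
          le_add_of_nonneg_right hR

end StmtAux

theorem stmt2 (n : ℕ) (χ : E3 → ℝ) (hsmooth : ContDiff ℝ (⊤ : ℕ∞) χ)
    (hsupp : Function.support χ ⊆ Metric.ball 0 1)
    (hnorm : ∫ x : E3, χ x ^ 2 = 1) (X : Fin n → E3) :
    Pfun n χ X = (n.factorial : ℝ) * permanentR n (Mmat n χ X)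
    ∧ (n.factorial : ℝ) ≤ Pfun n χ X := by
  classical
  have hχc : Continuous χ := hsmooth.continuous
  have hχsupp : HasCompactSupport χ :=
    HasCompactSupport.intro (isCompact_closedBall (0:E3) 1) (fun x hx => by
      by_contra h
      exact hx (Metric.ball_subset_closedBall (hsupp (Function.mem_support.mpr h))))
  have hcont : ∀ a : E3, Continuous fun y : E3 => χ (a - y) :=
    fun a => hχc.comp (continuous_const.sub continuous_id)
  have hcs : ∀ a : E3, HasCompactSupport fun y : E3 => χ (a - y) := by
    intro a
    have h2 : HasCompactSupport
        (χ ∘ ((Homeomorph.neg E3).trans (Homeomorph.addLeft a))) :=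
      hχsupp.comp_homeomorph _
    have h3 : (χ ∘ ((Homeomorph.neg E3).trans (Homeomorph.addLeft a)))
        = fun y : E3 => χ (a - y) := by
      funext y
      simp [sub_eq_add_neg]
    rwa [h3] at h2
  have hint : ∀ a b : E3, Integrable (fun y : E3 => χ (a - y) * χ (b - y)) :=
    fun a b => ((hcont a).mul (hcont b)).integrable_of_hasCompactSupport
      ((hcs a).mul_right)
  -- diagonal entries are 1
  have hMdiag : ∀ i, Mmat n χ X i i = 1 := by
    intro i
    have h1 : Mmat n χ X i i = ∫ y : E3, (fun z : E3 => χ z ^ 2) (X i - y) := by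
      unfold Mmat
      congr 1
      funext y
      simp [sq]
    rw [h1, integral_sub_left_eq_self (fun z : E3 => χ z ^ 2) volume (X i)]
    exact hnorm
  -- positive semidefiniteness
  have hPSD : (Mmat n χ X).PosSemidef := by
    refine Matrix.PosSemidef.of_dotProduct_mulVec_nonneg ?_ ?_
    · show (Mmat n χ X).conjTranspose = Mmat n χ X
      ext i j
      rw [Matrix.conjTranspose_apply, star_trivial]
      unfold Mmat
      congr 1
      funext y
      ring
    · intro x
      have key : dotProduct (star x) ((Mmat n χ X).mulVec x)
          = ∫ y : E3, (∑ j, x j * χ (X j - y))^2 := by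
        calc dotProduct (star x) ((Mmat n χ X).mulVec x)
            = ∑ j, ∑ k, (x j * x k) * Mmat n χ X j k := by
              simp only [dotProduct, Matrix.mulVec, Pi.star_apply, star_trivial,
                Finset.mul_sum]
              exact Finset.sum_congr rfl fun j _ => Finset.sum_congr rfl fun k _ => by ring
          _ = ∑ j, ∑ k, ∫ y : E3, (x j * x k) * (χ (X j - y) * χ (X k - y)) := by
              refine Finset.sum_congr rfl fun j _ => Finset.sum_congr rfl fun k _ => ?_
              exact (MeasureTheory.integral_const_mul (x j * x k)
                (fun y : E3 => χ (X j - y) * χ (X k - y))).symm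
          _ = ∑ j, ∫ y : E3, ∑ k, (x j * x k) * (χ (X j - y) * χ (X k - y)) := by
              refine Finset.sum_congr rfl fun j _ => ?_
              exact (MeasureTheory.integral_finset_sum _ fun k _ =>
                ((hint _ _).const_mul _)).symm
          _ = ∫ y : E3, ∑ j, ∑ k, (x j * x k) * (χ (X j - y) * χ (X k - y)) := by
              exact (MeasureTheory.integral_finset_sum _ fun j _ =>
                MeasureTheory.integrable_finset_sum _ fun k _ =>
                  ((hint _ _).const_mul _)).symm
          _ = ∫ y : E3, (∑ j, x j * χ (X j - y))^2 := by
              congr 1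
              funext y
              rw [sq, Fintype.sum_mul_sum]
              exact Finset.sum_congr rfl fun j _ =>
                Finset.sum_congr rfl fun k _ => by ring
      rw [key]
      exact MeasureTheory.integral_nonneg fun y => sq_nonneg _
  -- Gram factorization and Marcus inequality: the permanent is at least 1
  obtain ⟨B, hB⟩ : ∃ B : Matrix (Fin n) (Fin n) ℝ, Mmat n χ X = B.conjTranspose * B := by
    open scoped MatrixOrder in
    obtain ⟨B, hB⟩ := CStarAlgebra.nonneg_iff_eq_star_mul_self.mp hPSD.nonneg
    exact ⟨B, by rw [hB, Matrix.star_eq_conjTranspose]⟩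
  set v : Fin n → Fin n → ℝ := fun j t => B t j with hv
  have hMv : ∀ j k, Mmat n χ X j k = StmtAux.dot (v j) (v k) := by
    intro j k
    rw [hB]
    simp [Matrix.mul_apply, Matrix.conjTranspose_apply, StmtAux.dot, hv]
  have hperm1 : (1:ℝ) ≤ permanentR n (Mmat n χ X) := by
    have hperm : permanentR n (Mmat n χ X) = StmtAux.perV n v := by
      unfold permanentR StmtAux.perV
      exact Finset.sum_congr rfl fun σ _ => Finset.prod_congr rfl fun i _ => hMv _ _
    rw [hperm]
    have h1 : ∏ i : Fin n, StmtAux.dot (v i) (v i) = 1 := by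
      rw [Finset.prod_eq_one]
      intro i _
      rw [← hMv i i, hMdiag i]
    calc (1:ℝ) = ∏ i : Fin n, StmtAux.dot (v i) (v i) := h1.symm
      _ ≤ _ := StmtAux.marcus n v
  -- the Fubini computation
  have hre : ∀ (σ : Equiv.Perm (Fin n)) (Y : Fin n → E3),
      ∏ i, χ (X i - Y (σ i)) = ∏ j, χ (X (σ⁻¹ j) - Y j) := by
    intro σ Y
    rw [← Equiv.prod_comp σ (fun j => χ (X (σ⁻¹ j) - Y j))]
    refine Finset.prod_congr rfl fun i _ => ?_
    simp
  have hPA : Pfun n χ X = (n.factorial : ℝ) * permanentR n (Mmat n χ X) := by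
    unfold Pfun Gfun
    have hsq : ∀ Y : Fin n → E3,
        (∑ σ : Equiv.Perm (Fin n), ∏ i, χ (X i - Y (σ i)))^2
        = ∑ σ : Equiv.Perm (Fin n), ∑ τ : Equiv.Perm (Fin n),
            ∏ j, (χ (X (σ⁻¹ j) - Y j) * χ (X (τ⁻¹ j) - Y j)) := by
      intro Y
      rw [sq, Fintype.sum_mul_sum]
      refine Finset.sum_congr rfl fun σ _ => Finset.sum_congr rfl fun τ _ => ?_
      rw [hre σ Y, hre τ Y, ← Finset.prod_mul_distrib]
    calc ∫ Y : Fin n → E3, (∑ σ : Equiv.Perm (Fin n), ∏ i, χ (X i - Y (σ i)))^2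
        = ∫ Y : Fin n → E3, ∑ σ : Equiv.Perm (Fin n), ∑ τ : Equiv.Perm (Fin n),
            ∏ j, (χ (X (σ⁻¹ j) - Y j) * χ (X (τ⁻¹ j) - Y j)) := by
          congr 1
          funext Y
          exact hsq Y
      _ = ∑ σ : Equiv.Perm (Fin n), ∑ τ : Equiv.Perm (Fin n),
            ∫ Y : Fin n → E3, ∏ j, (χ (X (σ⁻¹ j) - Y j) * χ (X (τ⁻¹ j) - Y j)) := by
          rw [MeasureTheory.integral_finset_sum (μ := volume) _ (fun σ _ =>
            MeasureTheory.integrable_finset_sum _ fun τ _ =>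
              MeasureTheory.Integrable.fintype_prod fun j => hint _ _)]
          exact Finset.sum_congr rfl fun σ _ =>
            MeasureTheory.integral_finset_sum (μ := volume) _ fun τ _ =>
              MeasureTheory.Integrable.fintype_prod fun j => hint _ _
      _ = ∑ σ : Equiv.Perm (Fin n), ∑ τ : Equiv.Perm (Fin n),
            ∏ j, Mmat n χ X (σ⁻¹ j) (τ⁻¹ j) := by
          refine Finset.sum_congr rfl fun σ _ => Finset.sum_congr rfl fun τ _ => ?_
          rw [MeasureTheory.integral_fintype_prod_volume_eq_prod
            (fun j (y : E3) => χ (X (σ⁻¹ j) - y) * χ (X (τ⁻¹ j) - y))]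
          rfl
      _ = ∑ _τ : Equiv.Perm (Fin n), permanentR n (Mmat n χ X) := by
          rw [Finset.sum_comm]
          refine Finset.sum_congr rfl fun τ _ => ?_
          unfold permanentR
          refine (Fintype.sum_equiv ((Equiv.inv (Equiv.Perm (Fin n))).trans (Equiv.mulLeft τ))
            (fun π => ∏ i, Mmat n χ X (π i) i)
            (fun σ => ∏ j, Mmat n χ X (σ⁻¹ j) (τ⁻¹ j)) (fun π => ?_)).symm
          show ∏ i, Mmat n χ X (π i) i = ∏ j, Mmat n χ X ((τ * π⁻¹)⁻¹ j) (τ⁻¹ j)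
          rw [← Equiv.prod_comp τ (fun j => Mmat n χ X ((τ * π⁻¹)⁻¹ j) (τ⁻¹ j))]
          refine Finset.prod_congr rfl fun i _ => ?_
          congr 1
          · simp [Equiv.Perm.mul_apply]
          · simp
      _ = (n.factorial : ℝ) * permanentR n (Mmat n χ X) := by
          rw [Finset.sum_const, nsmul_eq_mul]
          congr 1
          simp [Fintype.card_perm]
  refine ⟨hPA, ?_⟩
  rw [hPA]
  calc (n.factorial : ℝ) = (n.factorial : ℝ) * 1 := (mul_one _).symm
    _ ≤ (n.factorial : ℝ) * permanentR n (Mmat n χ X) := by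
        refine mul_le_mul_of_nonneg_left hperm1 ?_
        positivity

end
end

section
/- With the polarization vectors ε_1(k) = (k_2, −k_1, 0)/√(k_1²+k_2²), ε_2(k) = (k/|k|) ∧ ε_1(k), there exists a constant C such that for all k with (k_1, k_2) ≠ 0 and each λ ∈ {1,2}, |∇_k ( |k|^{-1/2} ε_λ(k) )| ≤ C / ( |k|^{1/2} √(k_1² + k_2²) ). -/
open scoped BigOperators

noncomputable section

def eps1 (k : Fin 3 → ℝ) : Fin 3 → ℝ :=
  fun i => ![k 1, -k 0, 0] i / Real.sqrt (k 0 ^ 2 + k 1 ^ 2)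

def nm3 (k : Fin 3 → ℝ) : ℝ := Real.sqrt (∑ i, k i ^ 2)

def eps2 (k : Fin 3 → ℝ) : Fin 3 → ℝ :=
  crossProduct (fun i => k i / nm3 k) (eps1 k)

/-!
Both fields are products of `|k|^{-1/2}` with a vector field bounded by a constant, so by the
product rule it suffices to bound the derivatives of the factors. Differentiating a quotient by
the length `√(k₁² + k₂²)` or `|k|` of a vector costs one inverse power of that length, and
`|k| ≥ √(k₁² + k₂²)`. Since `ε₁(k) = (k × e₃)/√(k₁² + k₂²)` and `ε₂(k) = (k/|k|) × ε₁(k)`, both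
quotients are of the form `f(k)⁻¹ • L k` with `L` linear and `‖L k‖ ≤ f(k)`, and the cross product
is a bounded bilinear map.
-/

open ContinuousLinearMap

section

variable {𝕜 : Type*} [NontriviallyNormedField 𝕜]
  {E F G H : Type*} [NormedAddCommGroup E] [NormedSpace 𝕜 E] [NormedAddCommGroup F]
  [NormedSpace 𝕜 F] [NormedAddCommGroup G] [NormedSpace 𝕜 G] [NormedAddCommGroup H]
  [NormedSpace 𝕜 H] {x : E}

theorem ContinuousLinearMap.norm_fderiv_of_bilinear_le (B : F →L[𝕜] G →L[𝕜] H) {u : E → F}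
    {v : E → G} (hu : DifferentiableAt 𝕜 u x) (hv : DifferentiableAt 𝕜 v x) :
    ‖fderiv 𝕜 (fun y => B (u y) (v y)) x‖ ≤
      ‖B‖ * (‖fderiv 𝕜 u x‖ * ‖v x‖ + ‖u x‖ * ‖fderiv 𝕜 v x‖) := by
  rw [B.fderiv_of_bilinear hu hv]
  calc _ ≤ ‖B.precompR E (u x) (fderiv 𝕜 v x)‖ + ‖B.precompL E (fderiv 𝕜 u x) (v x)‖ :=
        norm_add_le _ _
    _ ≤ ‖B‖ * ‖u x‖ * ‖fderiv 𝕜 v x‖ + ‖B‖ * ‖fderiv 𝕜 u x‖ * ‖v x‖ := by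
        gcongr
        · exact (le_opNorm₂ _ _ _).trans (by gcongr; exact norm_precompR_le E B)
        · exact (le_opNorm₂ _ _ _).trans (by gcongr; exact norm_precompL_le E B)
    _ = _ := by ring

theorem norm_fderiv_smul_le {c : E → 𝕜} {f : E → F} (hc : DifferentiableAt 𝕜 c x)
    (hf : DifferentiableAt 𝕜 f x) :
    ‖fderiv 𝕜 (fun y => c y • f y) x‖ ≤ ‖fderiv 𝕜 c x‖ * ‖f x‖ + ‖c x‖ * ‖fderiv 𝕜 f x‖ := by
  rw [fderiv_fun_smul hc hf, add_comm]
  refine (norm_add_le _ _).trans ?_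
  rw [norm_smulRight_apply]
  gcongr
  exact norm_smul_le (c x) (fderiv 𝕜 f x)

end

section

variable {E F : Type*} [NormedAddCommGroup E] [NormedSpace ℝ E] [NormedAddCommGroup F]
  [NormedSpace ℝ F] {f : E → ℝ} {x : E}

theorem norm_fderiv_rpow_const (p : ℝ) (hf : DifferentiableAt ℝ f x) (hx : 0 < f x) :
    ‖fderiv ℝ (fun y => f y ^ p) x‖ = |p| * f x ^ (p - 1) * ‖fderiv ℝ f x‖ := by
  rw [(hf.hasFDerivAt.rpow_const (Or.inl hx.ne')).fderiv, norm_smul, Real.norm_eq_abs,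
    abs_mul, abs_of_pos (Real.rpow_pos_of_pos hx _)]

theorem norm_fderiv_inv_smul_le (L : E →L[ℝ] F) (hf : DifferentiableAt ℝ f x)
    (hx : 0 < f x) (hL : ‖L x‖ ≤ f x) :
    ‖fderiv ℝ (fun y => (f y)⁻¹ • L y) x‖ ≤ (‖fderiv ℝ f x‖ + ‖L‖) / f x := by
  have hinv : (fun y => (f y)⁻¹) = fun y => f y ^ (-1 : ℝ) := by
    simp only [Real.rpow_neg_one]
  have hdiff : DifferentiableAt ℝ (fun y => (f y)⁻¹) x := hf.inv hx.ne'
  calc _ ≤ ‖fderiv ℝ (fun y => (f y)⁻¹) x‖ * ‖L x‖ + ‖(f x)⁻¹‖ * ‖fderiv ℝ L x‖ :=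
        norm_fderiv_smul_le hdiff L.differentiableAt
    _ = (f x ^ 2)⁻¹ * ‖fderiv ℝ f x‖ * ‖L x‖ + (f x)⁻¹ * ‖L‖ := by
        rw [hinv, norm_fderiv_rpow_const _ hf hx, L.fderiv, norm_inv, Real.norm_of_nonneg hx.le]
        norm_num [Real.rpow_neg hx.le]
    _ ≤ (f x ^ 2)⁻¹ * ‖fderiv ℝ f x‖ * f x + (f x)⁻¹ * ‖L‖ := by gcongr
    _ = _ := by field_simp

end

section

variable {ι : Type*} [Fintype ι] (s : Finset ι) {x : ι → ℝ}

theorem hasFDerivAt_sqrt_sum_sq (hx : 0 < ∑ i ∈ s, x i ^ 2) :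
    HasFDerivAt (fun q : ι → ℝ => √(∑ i ∈ s, q i ^ 2))
      ((1 / (2 * √(∑ i ∈ s, x i ^ 2))) • ∑ i ∈ s, (2 * x i) • proj (R := ℝ) i) x := by
  have hsum : HasFDerivAt (fun q : ι → ℝ => ∑ i ∈ s, q i ^ 2)
      (∑ i ∈ s, (2 * x i) • proj (R := ℝ) i) x :=
    HasFDerivAt.fun_sum fun i _ => by
      have := (hasDerivAt_pow 2 (x i)).comp_hasFDerivAt x (hasFDerivAt_apply (𝕜 := ℝ) i x)
      simp only [Nat.cast_ofNat, pow_one, Nat.add_one_sub_one] at this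
      exact this
  exact hsum.sqrt hx.ne'

theorem norm_fderiv_sqrt_sum_sq_le (hx : 0 < ∑ i ∈ s, x i ^ 2) :
    ‖fderiv ℝ (fun q : ι → ℝ => √(∑ i ∈ s, q i ^ 2)) x‖ ≤ s.card := by
  set r := √(∑ i ∈ s, x i ^ 2)
  have hr : 0 < r := Real.sqrt_pos.2 hx
  have hxi : ∀ i ∈ s, |x i| ≤ r := fun i hi =>
    Real.abs_le_sqrt (Finset.single_le_sum (f := fun j => x j ^ 2)
      (fun _ _ => sq_nonneg _) hi)
  rw [(hasFDerivAt_sqrt_sum_sq s hx).fderiv]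
  refine opNorm_le_bound _ (by positivity) fun v => ?_
  have happly : ((1 / (2 * r)) • ∑ i ∈ s, (2 * x i) • proj (R := ℝ) i) v
      = (∑ i ∈ s, x i * v i) / r := by
    simp only [smul_apply, FunLike.coe_sum, Finset.sum_apply, proj_apply, smul_eq_mul,
      mul_assoc, ← Finset.mul_sum]
    field_simp
  rw [happly, Real.norm_eq_abs, abs_div, abs_of_pos hr, div_le_iff₀ hr]
  calc _ ≤ ∑ i ∈ s, |x i * v i| := Finset.abs_sum_le_sum_abs _ _
    _ ≤ ∑ i ∈ s, r * ‖v‖ := Finset.sum_le_sum fun i hi => by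
        rw [abs_mul]; exact mul_le_mul (hxi i hi) (norm_le_pi_norm v i) (abs_nonneg _) hr.le
    _ = s.card * ‖v‖ * r := by rw [Finset.sum_const, nsmul_eq_mul]; ring

end

section

variable {R : Type*} [NormedCommRing R]

theorem norm_crossProduct_le (a b : Fin 3 → R) : ‖crossProduct a b‖ ≤ 2 * ‖a‖ * ‖b‖ := by
  have hterm : ∀ i j l m : Fin 3, ‖a i * b j - a l * b m‖ ≤ 2 * ‖a‖ * ‖b‖ := fun i j l m =>
    calc _ ≤ ‖a i‖ * ‖b j‖ + ‖a l‖ * ‖b m‖ :=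
          (norm_sub_le _ _).trans (add_le_add (norm_mul_le _ _) (norm_mul_le _ _))
      _ ≤ ‖a‖ * ‖b‖ + ‖a‖ * ‖b‖ := by
          gcongr <;> first | exact norm_le_pi_norm a _ | exact norm_le_pi_norm b _
      _ = 2 * ‖a‖ * ‖b‖ := by ring
  refine pi_norm_le_iff_of_nonneg (by positivity) |>.2 fun i => ?_
  fin_cases i <;> simpa [cross_apply] using hterm _ _ _ _

end

section

variable (𝕜 : Type*) [NontriviallyNormedField 𝕜]

def crossProductCLM : (Fin 3 → 𝕜) →L[𝕜] (Fin 3 → 𝕜) →L[𝕜] (Fin 3 → 𝕜) :=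
  LinearMap.mkContinuous₂ crossProduct 2 norm_crossProduct_le

@[simp]
theorem crossProductCLM_apply (a b : Fin 3 → 𝕜) : crossProductCLM 𝕜 a b = crossProduct a b := rfl

theorem norm_crossProductCLM_le : ‖crossProductCLM 𝕜‖ ≤ 2 :=
  LinearMap.mkContinuous₂_norm_le _ zero_le_two _

end

theorem norm_inv_smul_le_one {F : Type*} [NormedAddCommGroup F] [NormedSpace ℝ F] {c : ℝ}
    {v : F} (h : ‖v‖ ≤ c) : ‖c⁻¹ • v‖ ≤ 1 := by
  have hc : 0 ≤ c := (norm_nonneg v).trans h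
  rw [norm_smul, norm_inv, Real.norm_of_nonneg hc]
  exact inv_mul_le_one_of_le₀ h hc

theorem norm_fderiv_rpow_neg_half_smul_le {E F : Type*} [NormedAddCommGroup E]
    [NormedSpace ℝ E] [NormedAddCommGroup F] [NormedSpace ℝ F] {f : E → ℝ} {ε : E → F} {x : E}
    {r a b c : ℝ} (hf : DifferentiableAt ℝ f x) (hε : DifferentiableAt ℝ ε x) (hr : 0 < r)
    (hrf : r ≤ f x) (hf' : ‖fderiv ℝ f x‖ ≤ c) (ha : ‖ε x‖ ≤ a) (hb : ‖fderiv ℝ ε x‖ ≤ b / r) :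
    ‖fderiv ℝ (fun y => f y ^ (-(1 / 2 : ℝ)) • ε y) x‖ ≤
      (c / 2 * a + b) / (f x ^ (1 / 2 : ℝ) * r) := by
  have hfx : 0 < f x := hr.trans_le hrf
  set X := f x ^ (1 / 2 : ℝ)
  have hX : 0 < X := Real.rpow_pos_of_pos hfx _
  have hXinv : f x ^ (-(1 / 2 : ℝ)) = X⁻¹ := Real.rpow_neg hfx.le _
  have hc : 0 ≤ c := (norm_nonneg _).trans hf'
  have ha0 : 0 ≤ a := (norm_nonneg _).trans ha
  calc _ ≤ ‖fderiv ℝ (fun y => f y ^ (-(1 / 2 : ℝ))) x‖ * ‖ε x‖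
          + ‖f x ^ (-(1 / 2 : ℝ))‖ * ‖fderiv ℝ ε x‖ :=
        norm_fderiv_smul_le (hf.rpow_const (Or.inl hfx.ne')) hε
    _ = 1 / 2 * (X⁻¹ / f x) * ‖fderiv ℝ f x‖ * ‖ε x‖ + X⁻¹ * ‖fderiv ℝ ε x‖ := by
        rw [norm_fderiv_rpow_const _ hf hfx, Real.rpow_sub_one hfx.ne', hXinv,
          Real.norm_of_nonneg (inv_pos.2 hX).le]
        norm_num
    _ ≤ 1 / 2 * (X⁻¹ / r) * c * a + X⁻¹ * (b / r) := by gcongr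
    _ = _ := by field_simp

theorem sqrt_sq_add_sq_eq_sqrt_sum (q : Fin 3 → ℝ) :
    √(q 0 ^ 2 + q 1 ^ 2) = √(∑ i ∈ {0, 1}, q i ^ 2) := by
  rw [Finset.sum_pair (by decide)]

theorem norm_le_nm3 (k : Fin 3 → ℝ) : ‖k‖ ≤ nm3 k :=
  pi_norm_le_iff_of_nonneg (Real.sqrt_nonneg _) |>.2 fun i => Real.abs_le_sqrt <|
    Finset.single_le_sum (f := fun j => k j ^ 2) (fun _ _ => sq_nonneg _) (Finset.mem_univ i)

theorem sqrt_sq_add_sq_le_nm3 (k : Fin 3 → ℝ) : √(k 0 ^ 2 + k 1 ^ 2) ≤ nm3 k := by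
  rw [sqrt_sq_add_sq_eq_sqrt_sum]
  exact Real.sqrt_le_sqrt <| Finset.sum_le_sum_of_subset_of_nonneg (Finset.subset_univ _)
    fun _ _ _ => sq_nonneg _

theorem norm_crossProduct_e₃_le (q : Fin 3 → ℝ) :
    ‖crossProduct q ![0, 0, 1]‖ ≤ √(q 0 ^ 2 + q 1 ^ 2) := by
  have hq : ∀ i ∈ ({0, 1} : Finset (Fin 3)), |q i| ≤ √(q 0 ^ 2 + q 1 ^ 2) := fun i hi => by
    rw [sqrt_sq_add_sq_eq_sqrt_sum]
    exact Real.abs_le_sqrt (Finset.single_le_sum (f := fun j => q j ^ 2)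
      (fun _ _ => sq_nonneg _) hi)
  refine pi_norm_le_iff_of_nonneg (Real.sqrt_nonneg _) |>.2 fun i => ?_
  fin_cases i <;> simp [cross_apply, hq]

theorem eps1_eq (q : Fin 3 → ℝ) :
    eps1 q = (√(q 0 ^ 2 + q 1 ^ 2))⁻¹ • (crossProductCLM ℝ).flip ![0, 0, 1] q := by
  ext i
  fin_cases i <;> simp [eps1, cross_apply, div_eq_inv_mul]

theorem norm_eps1_le_one (k : Fin 3 → ℝ) : ‖eps1 k‖ ≤ 1 := by
  rw [eps1_eq]
  exact norm_inv_smul_le_one (norm_crossProduct_e₃_le k)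

theorem differentiableAt_sqrt_sq_add_sq {k : Fin 3 → ℝ} (hk : 0 < k 0 ^ 2 + k 1 ^ 2) :
    DifferentiableAt ℝ (fun q : Fin 3 → ℝ => √(q 0 ^ 2 + q 1 ^ 2)) k :=
  DifferentiableAt.sqrt (by fun_prop) hk.ne'

theorem norm_fderiv_sqrt_sq_add_sq_le {k : Fin 3 → ℝ} (hk : 0 < k 0 ^ 2 + k 1 ^ 2) :
    ‖fderiv ℝ (fun q : Fin 3 → ℝ => √(q 0 ^ 2 + q 1 ^ 2)) k‖ ≤ 2 := by
  have hk' : 0 < ∑ i ∈ {0, 1}, k i ^ 2 := by rwa [Finset.sum_pair (by decide)]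
  simpa [sqrt_sq_add_sq_eq_sqrt_sum] using norm_fderiv_sqrt_sum_sq_le {0, 1} hk'

theorem differentiableAt_eps1 {k : Fin 3 → ℝ} (hk : 0 < k 0 ^ 2 + k 1 ^ 2) :
    DifferentiableAt ℝ eps1 k := by
  rw [funext eps1_eq]
  exact ((differentiableAt_sqrt_sq_add_sq hk).inv (Real.sqrt_pos.2 hk).ne').smul
    (ContinuousLinearMap.differentiableAt _)

theorem norm_fderiv_eps1_le {k : Fin 3 → ℝ} (hk : 0 < k 0 ^ 2 + k 1 ^ 2) :
    ‖fderiv ℝ eps1 k‖ ≤ 4 / √(k 0 ^ 2 + k 1 ^ 2) := by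
  have hL : ‖(crossProductCLM ℝ).flip ![0, 0, 1]‖ ≤ 2 := by
    refine (le_opNorm _ _).trans ?_
    have he₃ : ‖(![0, 0, 1] : Fin 3 → ℝ)‖ ≤ 1 :=
      pi_norm_le_iff_of_nonneg zero_le_one |>.2 fun i => by fin_cases i <;> simp
    rw [opNorm_flip]
    nlinarith [norm_crossProductCLM_le ℝ, norm_nonneg (crossProductCLM ℝ)]
  rw [funext eps1_eq]
  refine (norm_fderiv_inv_smul_le _ (differentiableAt_sqrt_sq_add_sq hk) (Real.sqrt_pos.2 hk)
    (norm_crossProduct_e₃_le k)).trans ?_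
  gcongr
  linarith [norm_fderiv_sqrt_sq_add_sq_le hk]

theorem differentiableAt_nm3 {k : Fin 3 → ℝ} (hk : 0 < nm3 k) : DifferentiableAt ℝ nm3 k :=
  (hasFDerivAt_sqrt_sum_sq Finset.univ (Real.sqrt_pos.1 hk)).differentiableAt

theorem norm_fderiv_nm3_le {k : Fin 3 → ℝ} (hk : 0 < nm3 k) : ‖fderiv ℝ nm3 k‖ ≤ 3 := by
  have h := norm_fderiv_sqrt_sum_sq_le Finset.univ (Real.sqrt_pos.1 hk)
  rwa [Finset.card_univ, Fintype.card_fin, Nat.cast_ofNat] at h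

theorem eps2_eq (q : Fin 3 → ℝ) : eps2 q = crossProductCLM ℝ ((nm3 q)⁻¹ • q) (eps1 q) := by
  have hunit : (fun i => q i / nm3 q) = (nm3 q)⁻¹ • q := by
    ext i
    simp [div_eq_inv_mul]
  rw [eps2, hunit, crossProductCLM_apply]

theorem norm_eps2_le_two (k : Fin 3 → ℝ) : ‖eps2 k‖ ≤ 2 := by
  rw [eps2_eq, crossProductCLM_apply]
  refine (norm_crossProduct_le _ _).trans ?_
  nlinarith [norm_inv_smul_le_one (norm_le_nm3 k), norm_eps1_le_one k, norm_nonneg (eps1 k),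
    norm_nonneg ((nm3 k)⁻¹ • k)]

theorem differentiableAt_inv_nm3_smul {k : Fin 3 → ℝ} (hk : 0 < nm3 k) :
    DifferentiableAt ℝ (fun q => (nm3 q)⁻¹ • q) k :=
  ((differentiableAt_nm3 hk).inv hk.ne').smul differentiableAt_id

theorem norm_fderiv_inv_nm3_smul_le {k : Fin 3 → ℝ} (hk : 0 < nm3 k) :
    ‖fderiv ℝ (fun q => (nm3 q)⁻¹ • q) k‖ ≤ 4 / nm3 k := by
  refine (norm_fderiv_inv_smul_le (.id ℝ _) (differentiableAt_nm3 hk) hk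
    (norm_le_nm3 k)).trans ?_
  gcongr
  linarith [norm_fderiv_nm3_le hk, norm_id_le (𝕜 := ℝ) (E := Fin 3 → ℝ)]

theorem differentiableAt_eps2 {k : Fin 3 → ℝ} (hk : 0 < k 0 ^ 2 + k 1 ^ 2) :
    DifferentiableAt ℝ eps2 k := by
  have hn : 0 < nm3 k := (Real.sqrt_pos.2 hk).trans_le (sqrt_sq_add_sq_le_nm3 k)
  rw [funext eps2_eq]
  exact ((crossProductCLM ℝ).hasFDerivAt_of_bilinear
    (differentiableAt_inv_nm3_smul hn).hasFDerivAt
    (differentiableAt_eps1 hk).hasFDerivAt).differentiableAt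

theorem norm_fderiv_eps2_le {k : Fin 3 → ℝ} (hk : 0 < k 0 ^ 2 + k 1 ^ 2) :
    ‖fderiv ℝ eps2 k‖ ≤ 16 / √(k 0 ^ 2 + k 1 ^ 2) := by
  set ρ := √(k 0 ^ 2 + k 1 ^ 2)
  have hρ : 0 < ρ := Real.sqrt_pos.2 hk
  have hn : 0 < nm3 k := hρ.trans_le (sqrt_sq_add_sq_le_nm3 k)
  rw [funext eps2_eq]
  calc _ ≤ ‖crossProductCLM ℝ‖ * (‖fderiv ℝ (fun q => (nm3 q)⁻¹ • q) k‖ * ‖eps1 k‖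
          + ‖(nm3 k)⁻¹ • k‖ * ‖fderiv ℝ eps1 k‖) :=
        (crossProductCLM ℝ).norm_fderiv_of_bilinear_le (differentiableAt_inv_nm3_smul hn)
          (differentiableAt_eps1 hk)
    _ ≤ 2 * (4 / nm3 k * 1 + 1 * (4 / ρ)) := by
        gcongr
        · exact norm_crossProductCLM_le ℝ
        · exact norm_fderiv_inv_nm3_smul_le hn
        · exact norm_eps1_le_one k
        · exact norm_inv_smul_le_one (norm_le_nm3 k)
        · exact norm_fderiv_eps1_le hk
    _ ≤ 2 * (4 / ρ * 1 + 1 * (4 / ρ)) := by gcongr; exact sqrt_sq_add_sq_le_nm3 k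
    _ = 16 / ρ := by ring

/-- There is a constant `C` such that away from the `k₃`-axis,
`|∇_k(|k|^{-1/2} ε_λ(k))| ≤ C/(|k|^{1/2} √(k₁²+k₂²))` for `λ = 1, 2`. -/
theorem stmt8 :
    ∃ C : ℝ, ∀ k : Fin 3 → ℝ, k 0 ^ 2 + k 1 ^ 2 ≠ 0 →
      ‖fderiv ℝ (fun q : Fin 3 → ℝ => (nm3 q ^ (-(1 / 2 : ℝ))) • eps1 q) k‖ ≤
          C / (nm3 k ^ ((1 / 2 : ℝ)) * Real.sqrt (k 0 ^ 2 + k 1 ^ 2))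
      ∧ ‖fderiv ℝ (fun q : Fin 3 → ℝ => (nm3 q ^ (-(1 / 2 : ℝ))) • eps2 q) k‖ ≤
          C / (nm3 k ^ ((1 / 2 : ℝ)) * Real.sqrt (k 0 ^ 2 + k 1 ^ 2)) := by
  refine ⟨19, fun k hk₀ => ?_⟩
  have hk : 0 < k 0 ^ 2 + k 1 ^ 2 := lt_of_le_of_ne (by positivity) (Ne.symm hk₀)
  have hρ : 0 < √(k 0 ^ 2 + k 1 ^ 2) := Real.sqrt_pos.2 hk
  have hρn := sqrt_sq_add_sq_le_nm3 k
  have hn : 0 < nm3 k := hρ.trans_le hρn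
  constructor
  · refine (norm_fderiv_rpow_neg_half_smul_le (differentiableAt_nm3 hn) (differentiableAt_eps1 hk)
      hρ hρn (norm_fderiv_nm3_le hn) (norm_eps1_le_one k) (norm_fderiv_eps1_le hk)).trans ?_
    gcongr
    norm_num
  · refine (norm_fderiv_rpow_neg_half_smul_le (differentiableAt_nm3 hn) (differentiableAt_eps2 hk)
      hρ hρn (norm_fderiv_nm3_le hn) (norm_eps2_le_two k) (norm_fderiv_eps2_le hk)).trans ?_
    gcongr
    norm_num

end
end
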